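/- For every ε with 0 < ε < 3/10 and every noiseless alternating binary protocol π of length n, there exists a deterministic interactive protocol Π over a binary erasure channel (alphabet {0,1}), with a fixed order of speaking, of length N ≤ c·n/ε for an absolute constant c > 0, such that for every input pair (x,y) and every erasure pattern E with |E| ≤ (3/10 − ε)·N, both parties output the transcript π(x,y). -/

import Mathlib

/-- A noiseless alternating binary protocol: Alice sends a bit in each odd round
(i.e., when the number of previously communicated bits is even) and Bob in each even
round, the bit being a fixed function of the sender's input and the past bits. -/
structure AltProtocol (X Y : Type) where
  nextA : X → List Bool → Bool
  nextB : Y → List Bool → Bool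

/-- The transcript of the first `n` rounds of the noiseless protocol on inputs `x, y`. -/
def AltProtocol.transcript {X Y : Type} (pr : AltProtocol X Y) (x : X) (y : Y) :
    ℕ → List Bool
  | 0 => []
  | n+1 =>
    let T := pr.transcript x y n
    T ++ [if T.length % 2 = 0 then pr.nextA x T else pr.nextB y T]

/-- A deterministic interactive protocol of length `N` over an erasure channel with
alphabet `Γ` and a fixed order of speaking: `ord i = true` means Alice is the sender
of round `i`. A view item is `some s` for a symbol the party sent or received intact,
and `none` for an erased reception. There is no feedback: the sender does not learn
whether its transmission was erased. Each party's next symbol and final output are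
functions of its input and its own view. -/
structure ErasureProtocol (Γ X Y O : Type) (N : ℕ) where
  ord : Fin N → Bool
  nextA : X → List (Option Γ) → Γ
  nextB : Y → List (Option Γ) → Γ
  outA : X → List (Option Γ) → O
  outB : Y → List (Option Γ) → O

/-- The pair (Alice's view, Bob's view) after the first `i` rounds of the execution on
inputs `x, y` with erasure pattern `E`: the sender appends its sent symbol to its view;
the receiver appends `none` if the round is erased and the sent symbol otherwise. -/
def ErasureProtocol.views {Γ X Y O : Type} {N : ℕ} (P : ErasureProtocol Γ X Y O N)
    (x : X) (y : Y) (E : Finset (Fin N)) : ℕ → List (Option Γ) × List (Option Γ)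
  | 0 => ([], [])
  | i+1 =>
    let v := P.views x y E i
    if h : i < N then
      if P.ord ⟨i, h⟩ then
        let s := P.nextA x v.1
        (v.1 ++ [some s], v.2 ++ [if (⟨i, h⟩ : Fin N) ∈ E then none else some s])
      else
        let s := P.nextB y v.2
        (v.1 ++ [if (⟨i, h⟩ : Fin N) ∈ E then none else some s], v.2 ++ [some s])
    else v

/-!
Rounds are grouped into blocks of ten, Alice sending in the even blocks and Bob in the odd
ones. Each party keeps a prefix of the transcript ending where the other party speaks; in its
block it sends the length of that prefix mod 3 and its last bit, encoded in a binary code of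
length 10 with six words at pairwise distance 6, so that up to five erasures per block are
corrected. A receiver whose prefix is one bit shorter than the sender's appends that bit and
then its own next bit.

If after `t` blocks both parties know the first `ℓ` bits and the speaker of bit `ℓ` knows it
too, the potential `6ℓ + 3·[the party ahead sends block t]` grows by at least `3 - eₜ` in block
`t`, where `eₜ` is the number of erasures in it: a fresh block either gets through (`ℓ`
grows) or carries at least six erasures, and a stale block changes nothing but hands the
lead to the next sender. After `m` blocks this gives `6ℓ ≥ 3m - |E|`, which is at least `6n`
as soon as `|E| ≤ (3/10 - ε)·10m` and `m ≥ 3n/(5ε)`.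
-/

open Finset

section ErasureDecoding

variable {ι α : Type*} {k : ℕ}

def IsErasureOf (w : Fin k → Option α) (c : Fin k → α) : Prop :=
  ∀ j, ∀ a ∈ w j, c j = a

def erasedPositions (w : Fin k → Option α) : Finset (Fin k) :=
  {j | w j = none}

open Classical in
noncomputable def decode (C : ι → Fin k → α) (w : Fin k → Option α) : Option ι :=
  if h : ∃! u, IsErasureOf w (C u) then some h.exists.choose else none

variable {C : ι → Fin k → α} {w : Fin k → Option α} {u : ι}

theorem decode_eq_none_or_eq_some (hu : IsErasureOf w (C u)) :
    decode C w = none ∨ decode C w = some u := by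
  unfold decode
  split_ifs with h
  · exact Or.inr (congrArg some (h.unique h.exists.choose_spec hu))
  · exact Or.inl rfl

theorem decode_eq_some_of_card_erasedPositions_lt [DecidableEq α] {d : ℕ}
    (hC : ∀ u v, u ≠ v → d ≤ hammingDist (C u) (C v)) (hu : IsErasureOf w (C u))
    (hw : #(erasedPositions w) < d) : decode C w = some u := by
  have huniq : ∃! v, IsErasureOf w (C v) := by
    refine ⟨u, hu, fun v hv => ?_⟩
    by_contra hvu
    -- two words consistent with `w` can only differ at erased positions
    have hsub : ({j | C v j ≠ C u j} : Finset (Fin k)) ⊆ erasedPositions w := by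
      intro j hj
      simp only [erasedPositions, mem_filter, mem_univ, true_and] at hj ⊢
      cases hwj : w j with
      | none => rfl
      | some a => exact absurd ((hv j a hwj).trans (hu j a hwj).symm) hj
    exact absurd ((hC v u hvu).trans (card_le_card hsub)) (not_le.2 hw)
  rcases decode_eq_none_or_eq_some hu with h | h
  · simp [decode, huniq] at h
  · exact h

end ErasureDecoding

namespace ErasureProtocol

variable {Γ X Y O : Type} {N : ℕ} (P : ErasureProtocol Γ X Y O N) (x : X) (y : Y)
  (E : Finset (Fin N))

def sent (i : Fin N) : Γ :=
  cond (P.ord i) (P.nextA x (P.views x y E i).1) (P.nextB y (P.views x y E i).2)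

/-- The view of Alice (`p = true`) or Bob (`p = false`) after `i` rounds. -/
def view (p : Bool) (i : ℕ) : List (Option Γ) :=
  cond p (P.views x y E i).1 (P.views x y E i).2

theorem view_succ (p : Bool) (i : Fin N) :
    P.view x y E p (i + 1) =
      P.view x y E p i ++ [if P.ord i ≠ p ∧ i ∈ E then none else some (P.sent x y E i)] := by
  cases p <;> cases hi : P.ord i <;> simp [view, sent, views, hi]

theorem view_length (p : Bool) {i : ℕ} (hi : i ≤ N) : (P.view x y E p i).length = i := by
  induction i with
  | zero => cases p <;> rfl
  | succ i ih => simp [view_succ P x y E p ⟨i, hi⟩, ih (by omega)]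

theorem view_getD (p : Bool) (i : Fin N) {j : ℕ} (hij : (i : ℕ) < j) (hj : j ≤ N) :
    (P.view x y E p j).getD i none =
      if P.ord i ≠ p ∧ i ∈ E then none else some (P.sent x y E i) := by
  induction j with
  | zero => omega
  | succ j ih =>
    rw [view_succ P x y E p ⟨j, hj⟩]
    rcases Nat.lt_succ_iff_lt_or_eq.1 hij with hij | rfl
    · rw [List.getD_append _ _ _ _ (by rw [view_length P x y E p (by omega)]; exact hij)]
      exact ih hij (by omega)
    · have hlen := view_length P x y E p (by omega : (i : ℕ) ≤ N)
      simp [hlen]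

end ErasureProtocol

/-- Alice speaks at even positions of the transcript (and in even blocks of rounds). -/
def isAliceTurn (ℓ : ℕ) : Bool := decide (ℓ % 2 = 0)

theorem isAliceTurn_succ (ℓ : ℕ) : isAliceTurn (ℓ + 1) = !isAliceTurn ℓ := by
  simp only [isAliceTurn]
  by_cases h : ℓ % 2 = 0 <;> simp [h] <;> omega

theorem isAliceTurn_eq_iff {a b : ℕ} : isAliceTurn a = isAliceTurn b ↔ a % 2 = b % 2 := by
  simp only [isAliceTurn]
  by_cases ha : a % 2 = 0 <;> by_cases hb : b % 2 = 0 <;> simp [ha, hb] <;> omega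

namespace AltProtocol

variable {X Y : Type} (pr : AltProtocol X Y) (x : X) (y : Y)

def next (p : Bool) : List Bool → Bool := cond p (pr.nextA x) (pr.nextB y)

theorem length_transcript (ℓ : ℕ) : (pr.transcript x y ℓ).length = ℓ := by
  induction ℓ with
  | zero => rfl
  | succ ℓ ih => simp [transcript, ih]

theorem transcript_succ (ℓ : ℕ) :
    pr.transcript x y (ℓ + 1) =
      pr.transcript x y ℓ ++ [pr.next x y (isAliceTurn ℓ) (pr.transcript x y ℓ)] := by
  simp only [transcript, length_transcript, next, isAliceTurn]
  split_ifs with h <;> simp [h]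

theorem take_transcript {a ℓ : ℕ} (h : a ≤ ℓ) :
    (pr.transcript x y ℓ).take a = pr.transcript x y a := by
  induction ℓ with
  | zero => rw [Nat.le_zero.1 h]; rfl
  | succ ℓ ih =>
    rcases Nat.of_le_succ h with h | rfl
    · rw [transcript_succ, List.take_append_of_le_length (by rw [length_transcript]; exact h),
        ih h]
    · exact List.take_of_length_le (length_transcript pr x y _).le

end AltProtocol

namespace ErasureSimulation

/-- Positions of a block are the ten pairs from `{1,…,5}`; word `u ≠ 0` marks the pairs
containing `u` and word `0` is all ones, so distinct words differ in exactly six positions. -/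
def blockPairs : Fin 10 → Fin 6 × Fin 6 :=
  ![(1, 2), (1, 3), (1, 4), (1, 5), (2, 3), (2, 4), (2, 5), (3, 4), (3, 5), (4, 5)]

def blockCode (msg : ZMod 3 × Bool) (j : Fin 10) : Bool :=
  let u : Fin 6 := ⟨2 * msg.1.val + msg.2.toNat, by
    have := msg.1.val_lt; cases msg.2 <;> simp <;> omega⟩
  u = 0 || u = (blockPairs j).1 || u = (blockPairs j).2

theorem six_le_hammingDist_blockCode :
    ∀ u v, u ≠ v → 6 ≤ hammingDist (blockCode u) (blockCode v) := by
  decide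

/-- The length is sent mod 3, which is enough to tell a fresh message from a stale one. -/
def symbol (T : List Bool) : ZMod 3 × Bool := (T.length, T.getLastD false)

section PartyState

variable (p : Bool) (f : List Bool → Bool)

def selfExtend (T : List Bool) : List Bool :=
  if isAliceTurn T.length = p then T ++ [f T] else T

noncomputable def receive (T : List Bool) (w : Fin 10 → Option Bool) : List Bool :=
  match decode blockCode w with
  | some (c, b) => if c = (T.length + 1 : ℕ) then selfExtend p f (T ++ [b]) else T
  | none => T

def block (v : List (Option Bool)) (t : ℕ) (j : Fin 10) : Option Bool :=
  v.getD (10 * t + j) none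

noncomputable def state (v : List (Option Bool)) : ℕ → List Bool
  | 0 => selfExtend p f []
  | t + 1 => if isAliceTurn t = p then state v t else receive p f (state v t) (block v t)

noncomputable def sendSymbol (v : List (Option Bool)) : Bool :=
  blockCode (symbol (state p f v (v.length / 10))) ⟨v.length % 10, Nat.mod_lt _ (by norm_num)⟩

theorem state_congr {v v' : List (Option Bool)} {t : ℕ}
    (h : ∀ i < 10 * t, v.getD i none = v'.getD i none) : state p f v t = state p f v' t := by
  induction t with
  | zero => rfl
  | succ t ih =>
    have hblock : block v t = block v' t := funext fun j => h _ (by omega)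
    simp only [state, ih fun i hi => h i (by omega), hblock]

end PartyState

noncomputable def blockProtocol {X Y : Type} (pr : AltProtocol X Y) (n m : ℕ) :
    ErasureProtocol Bool X Y (List Bool) (10 * m) where
  ord i := isAliceTurn (i / 10)
  nextA x := sendSymbol true (pr.nextA x)
  nextB y := sendSymbol false (pr.nextB y)
  outA x v := (state true (pr.nextA x) v (v.length / 10)).take n
  outB y v := (state false (pr.nextB y) v (v.length / 10)).take n

section Receive

variable {X Y : Type} (pr : AltProtocol X Y) (x : X) (y : Y) {p : Bool} {r k : ℕ}
  {w : Fin 10 → Option Bool}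

theorem receive_eq_self_of_stale (hw : IsErasureOf w (blockCode (symbol (pr.transcript x y k))))
    (hk : k + 1 = r) :
    receive p (pr.next x y p) (pr.transcript x y r) w = pr.transcript x y r := by
  have hstale : (k : ZMod 3) ≠ ((r + 1 : ℕ) : ZMod 3) := by
    rw [Ne, ZMod.natCast_eq_natCast_iff' _ _ 3]
    omega
  rcases decode_eq_none_or_eq_some hw with hd | hd <;>
    simp only [receive, hd, symbol, pr.length_transcript, if_neg hstale]

theorem receive_eq_or_of_fresh (hr : isAliceTurn r ≠ p)
    (hw : IsErasureOf w (blockCode (symbol (pr.transcript x y (r + 1))))) :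
    receive p (pr.next x y p) (pr.transcript x y r) w = pr.transcript x y (r + 2) ∨
      (receive p (pr.next x y p) (pr.transcript x y r) w = pr.transcript x y r ∧
        6 ≤ #(erasedPositions w)) := by
  have hturn : isAliceTurn (r + 1) = p := by
    rw [isAliceTurn_succ]; cases p <;> simpa using hr
  have hdecoded : decode blockCode w = some (symbol (pr.transcript x y (r + 1))) →
      receive p (pr.next x y p) (pr.transcript x y r) w = pr.transcript x y (r + 2) := by
    intro hd
    simp only [receive, hd, symbol, pr.length_transcript, if_true]
    rw [pr.transcript_succ x y r, List.getLastD_eq_getLast?, List.getLast?_concat,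
      Option.getD_some, ← pr.transcript_succ, selfExtend, pr.length_transcript, if_pos hturn,
      ← hturn, ← pr.transcript_succ]
  rcases decode_eq_none_or_eq_some hw with hd | hd
  · refine .inr ⟨by simp [receive, hd], ?_⟩
    by_contra hlt
    have := decode_eq_some_of_card_erasedPositions_lt six_le_hammingDist_blockCode hw (by omega)
    simp [hd] at this
  · exact .inl (hdecoded hd)

end Receive

def blockErasures {N : ℕ} (E : Finset (Fin N)) (t : ℕ) : ℕ := #{i ∈ E | i.val / 10 = t}

theorem sum_blockErasures {m : ℕ} (E : Finset (Fin (10 * m))) :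
    ∑ t ∈ range m, blockErasures E t = #E := by
  refine (card_eq_sum_card_fiberwise (f := fun i : Fin (10 * m) => i.val / 10)
    fun i _ => ?_).symm
  have := i.isLt
  simp only [coe_range, Set.mem_Iio]
  omega

section Execution

variable {X Y : Type} (pr : AltProtocol X Y) (n m : ℕ) (x : X) (y : Y)
  (E : Finset (Fin (10 * m)))

noncomputable def blockState (p : Bool) (t : ℕ) : List Bool :=
  state p (pr.next x y p) ((blockProtocol pr n m).view x y E p (10 * m)) t

noncomputable def receivedBlock (t : ℕ) : Fin 10 → Option Bool :=
  block ((blockProtocol pr n m).view x y E (!isAliceTurn t) (10 * m)) t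

theorem sent_blockProtocol (i : Fin (10 * m)) :
    (blockProtocol pr n m).sent x y E i =
      blockCode (symbol (blockState pr n m x y E (isAliceTurn (i / 10)) (i / 10)))
        ⟨i % 10, Nat.mod_lt _ (by norm_num)⟩ := by
  have key : ∀ p, sendSymbol p (pr.next x y p) ((blockProtocol pr n m).view x y E p i) =
      blockCode (symbol (blockState pr n m x y E p (i / 10)))
        ⟨i % 10, Nat.mod_lt _ (by norm_num)⟩ := by
    intro p
    have hlen := (blockProtocol pr n m).view_length x y E p i.isLt.le
    simp only [sendSymbol, hlen, blockState]
    congr 2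
    refine state_congr _ _ fun k hk => ?_
    rw [ErasureProtocol.view_getD _ _ _ _ _ ⟨k, by omega⟩ (by simp; omega) i.isLt.le,
      ErasureProtocol.view_getD _ _ _ _ _ ⟨k, by omega⟩ (by simp; omega) le_rfl]
  cases h : isAliceTurn (i / 10) <;> simp only [ErasureProtocol.sent, blockProtocol, h] <;>
    exact key _

variable {m} {t : ℕ}

theorem receivedBlock_apply (ht : t < m) (j : Fin 10) :
    receivedBlock pr n m x y E t j =
      if (⟨10 * t + j, by omega⟩ : Fin (10 * m)) ∈ E then none
      else some (blockCode (symbol (blockState pr n m x y E (isAliceTurn t) t)) j) := by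
  have hdiv : (10 * t + j) / 10 = t := by omega
  have hmod : (⟨(10 * t + j) % 10, Nat.mod_lt _ (by norm_num)⟩ : Fin 10) = j := by
    ext; simp only; omega
  refine ((blockProtocol pr n m).view_getD x y E _ ⟨10 * t + j, by omega⟩ (j := 10 * m)
    (by simp only; omega) le_rfl).trans ?_
  have hord : (blockProtocol pr n m).ord ⟨10 * t + j, by omega⟩ = isAliceTurn t :=
    congrArg isAliceTurn hdiv
  simp only [sent_blockProtocol, hord, hdiv, hmod, ne_eq, Bool.not_eq_not, true_and]

theorem receivedBlock_isErasureOf (ht : t < m) :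
    IsErasureOf (receivedBlock pr n m x y E t)
      (blockCode (symbol (blockState pr n m x y E (isAliceTurn t) t))) := by
  intro j a ha
  rw [receivedBlock_apply pr n x y E ht] at ha
  split_ifs at ha
  exacts [(Option.not_mem_none a ha).elim, Option.mem_some_iff.1 ha]

theorem card_erasedPositions_receivedBlock_le (ht : t < m) :
    #(erasedPositions (receivedBlock pr n m x y E t)) ≤ blockErasures E t := by
  refine card_le_card_of_injOn (fun j => (⟨10 * t + j, by omega⟩ : Fin (10 * m)))
    (fun j hj => ?_) (fun j₁ _ j₂ _ h => Fin.ext (by simpa using congrArg Fin.val h))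
  simp only [erasedPositions, coe_filter, mem_univ, true_and, Set.mem_ofPred_eq,
    receivedBlock_apply pr n x y E ht] at hj
  simp only [coe_filter, Set.mem_ofPred_eq]
  split_ifs at hj with hE
  exact ⟨hE, by omega⟩

theorem blockState_succ_sender (t : ℕ) :
    blockState pr n m x y E (isAliceTurn t) (t + 1) =
      blockState pr n m x y E (isAliceTurn t) t := by
  simp [blockState, state]

theorem blockState_succ_receiver (t : ℕ) :
    blockState pr n m x y E (!isAliceTurn t) (t + 1) =
      receive (!isAliceTurn t) (pr.next x y (!isAliceTurn t))
        (blockState pr n m x y E (!isAliceTurn t) t) (receivedBlock pr n m x y E t) := by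
  simp [blockState, state, receivedBlock]

def CommonPrefix (t ℓ : ℕ) : Prop :=
  blockState pr n m x y E (isAliceTurn ℓ) t = pr.transcript x y (ℓ + 1) ∧
    blockState pr n m x y E (!isAliceTurn ℓ) t = pr.transcript x y ℓ

/-- `(ℓ + t + 1) % 2 = 1` exactly when the party ahead sends block `t`. -/
theorem exists_commonPrefix_succ {ℓ : ℕ} (ht : t < m) (h : CommonPrefix pr n x y E t ℓ) :
    ∃ ℓ', CommonPrefix pr n x y E (t + 1) ℓ' ∧
      6 * ℓ + 3 * ((ℓ + t + 1) % 2) + 3 ≤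
        6 * ℓ' + 3 * ((ℓ' + t) % 2) + blockErasures E t := by
  have hsend := blockState_succ_sender pr n x y E t
  have hrecv := blockState_succ_receiver pr n x y E t
  have hw := receivedBlock_isErasureOf pr n x y E ht
  have hcard := card_erasedPositions_receivedBlock_le pr n x y E ht
  obtain ⟨hlead, hlag⟩ := h
  by_cases hs : isAliceTurn ℓ = isAliceTurn t
  · have hpar := isAliceTurn_eq_iff.1 hs
    rw [hs] at hlead hlag
    rw [hlead] at hw
    rcases receive_eq_or_of_fresh pr x y (p := !isAliceTurn t) (by rw [hs]; simp) hw with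
      hadv | ⟨hstall, he⟩
    · refine ⟨ℓ + 1, ⟨?_, ?_⟩, by omega⟩
      · rw [isAliceTurn_succ, hs, hrecv, hlag, hadv]
      · rw [isAliceTurn_succ, hs, Bool.not_not, hsend, hlead]
    · refine ⟨ℓ, ⟨?_, ?_⟩, by omega⟩
      · rw [hs, hsend, hlead]
      · rw [hs, hrecv, hlag, hstall]
  · have hpar : ℓ % 2 ≠ t % 2 := mt isAliceTurn_eq_iff.2 hs
    have hs' := Bool.eq_not.2 hs
    rw [hs'] at hlead hlag
    rw [Bool.not_not] at hlag
    rw [hlag] at hw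
    refine ⟨ℓ, ⟨?_, ?_⟩, by omega⟩
    · rw [hs', hrecv, hlead, receive_eq_self_of_stale pr x y hw rfl]
    · rw [hs', Bool.not_not, hsend, hlag]

theorem exists_commonPrefix (ht : t ≤ m) :
    ∃ ℓ, CommonPrefix pr n x y E t ℓ ∧
      3 * (t + 1) ≤ 6 * ℓ + 3 * ((ℓ + t + 1) % 2) + ∑ s ∈ range t, blockErasures E s := by
  induction t with
  | zero =>
    refine ⟨0, ⟨?_, ?_⟩, by simp⟩ <;>
      simp [blockState, state, selfExtend, isAliceTurn, AltProtocol.transcript, AltProtocol.next]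
  | succ t ih =>
    obtain ⟨ℓ, hℓ, hpot⟩ := ih (by omega)
    obtain ⟨ℓ', hℓ', hstep⟩ := exists_commonPrefix_succ pr n x y E (by omega) hℓ
    refine ⟨ℓ', hℓ', ?_⟩
    rw [sum_range_succ]
    omega

theorem take_blockState_of_commonPrefix {ℓ k : ℕ} (h : CommonPrefix pr n x y E t ℓ) (p : Bool)
    (hk : k ≤ ℓ) : (blockState pr n m x y E p t).take k = pr.transcript x y k := by
  by_cases hp : isAliceTurn ℓ = p
  · rw [← hp, h.1, pr.take_transcript x y (by omega)]
  · rw [Bool.eq_not.2 (Ne.symm hp), h.2, pr.take_transcript x y hk]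

theorem blockProtocol_correct (hE : #E + 6 * n ≤ 3 * m) :
    (blockProtocol pr n m).outA x ((blockProtocol pr n m).views x y E (10 * m)).1 =
        pr.transcript x y n ∧
      (blockProtocol pr n m).outB y ((blockProtocol pr n m).views x y E (10 * m)).2 =
        pr.transcript x y n := by
  obtain ⟨ℓ, hℓ, hpot⟩ := exists_commonPrefix pr n x y E (le_refl m)
  rw [sum_blockErasures] at hpot
  have hout : ∀ p, (state p (pr.next x y p) ((blockProtocol pr n m).view x y E p (10 * m))
      (((blockProtocol pr n m).view x y E p (10 * m)).length / 10)).take n =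
        pr.transcript x y n := by
    intro p
    rw [ErasureProtocol.view_length _ _ _ _ _ le_rfl, Nat.mul_div_cancel_left _ (by norm_num)]
    exact take_blockState_of_commonPrefix pr n x y E hℓ p (by omega)
  exact ⟨hout true, hout false⟩

end Execution

end ErasureSimulation

theorem ten_mul_ceil_le {n : ℕ} {ε : ℝ} (hε : 0 < ε) (hε1 : ε ≤ 1) :
    ((10 * ⌈3 * n / (5 * ε)⌉₊ : ℕ) : ℝ) ≤ 16 * n / ε := by
  rcases n.eq_zero_or_pos with rfl | hn
  · simp
  have hceil := Nat.ceil_lt_add_one (show 0 ≤ 3 * (n : ℝ) / (5 * ε) by positivity)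
  have hn1 : 1 ≤ (n : ℝ) / ε := (one_le_div hε).2 (hε1.trans (by exact_mod_cast hn))
  have hsplit : 16 * (n : ℝ) / ε = 10 * (3 * n / (5 * ε)) + 10 * (n / ε) := by
    field_simp; ring
  push_cast
  linarith

theorem add_six_mul_le_of_le_fraction {e n m : ℕ} {ε : ℝ} (hε : 0 < ε)
    (hm : 3 * n / (5 * ε) ≤ m) (he : (e : ℝ) ≤ (3 / 10 - ε) * (10 * m : ℕ)) :
    e + 6 * n ≤ 3 * m := by
  have hn : 3 * (n : ℝ) ≤ m * (5 * ε) := (div_le_iff₀ (by positivity)).1 hm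
  have : (e : ℝ) + 6 * n ≤ 3 * m := by push_cast at he; linarith
  exact_mod_cast this

/-- For every ε with 0 < ε < 3/10 and every noiseless alternating binary
protocol π of length n, there is a deterministic protocol over a binary erasure channel
with a fixed order of speaking, of length N ≤ c·n/ε for an absolute constant c > 0,
such that for every input pair (x,y) and every erasure pattern E with
|E| ≤ (3/10 − ε)·N, both parties output the transcript π(x,y). -/
theorem binary_erasure_three_tenths :
    ∃ c : ℝ, 0 < c ∧
      ∀ (X Y : Type) (pr : AltProtocol X Y) (n : ℕ) (ε : ℝ),
        0 < ε → ε < 3/10 →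
        ∃ (N : ℕ) (P : ErasureProtocol Bool X Y (List Bool) N),
          (N : ℝ) ≤ c * n / ε ∧
          ∀ (x : X) (y : Y) (E : Finset (Fin N)),
            (E.card : ℝ) ≤ (3/10 - ε) * N →
            P.outA x (P.views x y E N).1 = pr.transcript x y n ∧
            P.outB y (P.views x y E N).2 = pr.transcript x y n := by
  refine ⟨16, by norm_num, fun X Y pr n ε hε hε3 => ?_⟩
  refine ⟨_, ErasureSimulation.blockProtocol pr n ⌈3 * n / (5 * ε)⌉₊,
    ten_mul_ceil_le hε (by linarith), fun x y E hE => ?_⟩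
  exact ErasureSimulation.blockProtocol_correct pr n x y E
    (add_six_mul_le_of_le_fraction hε (Nat.le_ceil _) hE)
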